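/- arXiv:2407.06184 — 7 statements merged into one kernel-verified Lean document; each statement's English description precedes it below -/
import Mathlib

section
/- If m₁,…,m_r, n₁,…,n_s are natural numbers with m₁+⋯+m_r+n₁+⋯+n_s ≤ m, then the product (m₁+1)!⋯(m_r+1)!·T_{n₁}⋯T_{n_s} divides T_m. -/
/-- `T m = ∏_{p prime} p ^ ⌊m/(p-1)⌋`. -/
def PappasT (m : ℕ) : ℕ :=
  ∏ q ∈ Finset.filter Nat.Prime (Finset.range (m + 2)), q ^ (m / (q - 1))

lemma PappasT_ne_zero (m : ℕ) : PappasT m ≠ 0 := by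
  refine Finset.prod_ne_zero_iff.2 fun q hq => ?_
  exact pow_ne_zero _ (Nat.Prime.ne_zero (Finset.mem_filter.1 hq).2)

lemma PappasT_factorization (m p : ℕ) (hp : p.Prime) :
    (PappasT m).factorization p = m / (p - 1) := by
  unfold PappasT
  rw [Nat.factorization_prod (fun q hq => pow_ne_zero _
      (Nat.Prime.ne_zero (Finset.mem_filter.1 hq).2))]
  rw [Finset.sum_apply']
  rw [Finset.sum_eq_single p]
  · by_cases h : p ∈ Finset.filter Nat.Prime (Finset.range (m + 2))
    · rw [hp.factorization_pow, Finsupp.single_eq_same]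
    · have hpm : ¬ p < m + 2 := fun hlt => h (Finset.mem_filter.2 ⟨Finset.mem_range.2 hlt, hp⟩)
      have : m < p - 1 := by omega
      simp [Nat.div_eq_of_lt this]
  · intro q hq hqp
    rw [(Finset.mem_filter.1 hq).2.factorization_pow, Finsupp.single_eq_of_ne hqp.symm]
  · intro h
    have hpm : ¬ p < m + 2 := fun hlt => h (Finset.mem_filter.2 ⟨Finset.mem_range.2 hlt, hp⟩)
    have : m < p - 1 := by omega
    simp [hp.factorization_pow, Nat.div_eq_of_lt this]

lemma PappasT_mul_dvd (a b : ℕ) : PappasT a * PappasT b ∣ PappasT (a + b) := by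
  rw [← Nat.factorization_le_iff_dvd (mul_ne_zero (PappasT_ne_zero a) (PappasT_ne_zero b))
      (PappasT_ne_zero _)]
  intro p
  by_cases hp : p.Prime
  · rw [Nat.factorization_mul (PappasT_ne_zero a) (PappasT_ne_zero b), Finsupp.add_apply,
      PappasT_factorization a p hp, PappasT_factorization b p hp, PappasT_factorization _ p hp]
    rcases Nat.eq_zero_or_pos (p - 1) with h | h
    · simp [h]
    refine (Nat.le_div_iff_mul_le h).2 ?_
    calc (a / (p - 1) + b / (p - 1)) * (p - 1)
        = a / (p - 1) * (p - 1) + b / (p - 1) * (p - 1) := by ring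
      _ ≤ a + b := Nat.add_le_add (Nat.div_mul_le_self _ _) (Nat.div_mul_le_self _ _)
  · simp [Nat.factorization_eq_zero_of_not_prime _ hp]

lemma PappasT_mono {a b : ℕ} (h : a ≤ b) : PappasT a ∣ PappasT b := by
  rw [← Nat.factorization_le_iff_dvd (PappasT_ne_zero a) (PappasT_ne_zero b)]
  intro p
  by_cases hp : p.Prime
  · rw [PappasT_factorization a p hp, PappasT_factorization b p hp]
    exact Nat.div_le_div_right h
  · simp [Nat.factorization_eq_zero_of_not_prime _ hp]

lemma factorial_dvd_PappasT (x : ℕ) : Nat.factorial (x + 1) ∣ PappasT x := by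
  rw [← Nat.factorization_le_iff_dvd (Nat.factorial_ne_zero _) (PappasT_ne_zero x)]
  intro p
  by_cases hp : p.Prime
  · rw [PappasT_factorization x p hp, Nat.factorization_def _ hp]
    haveI : Fact p.Prime := ⟨hp⟩
    have hleg := sub_one_mul_padicValNat_factorial (p := p) (x + 1)
    have hdig : 0 < (p.digits (x + 1)).sum := by
      have hne : p.digits (x + 1) ≠ [] := Nat.digits_ne_nil_iff_ne_zero.2 (Nat.succ_ne_zero x)
      have hlast := Nat.getLast_digit_ne_zero p (Nat.succ_ne_zero x)
      have hmem := List.getLast_mem hne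
      exact lt_of_lt_of_le (Nat.pos_of_ne_zero hlast)
        (List.single_le_sum (fun y (_ : y ∈ p.digits (x + 1)) => Nat.zero_le y) _ hmem)
    have hpos : 0 < p - 1 := by have := hp.two_le; omega
    refine (Nat.le_div_iff_mul_le hpos).2 ?_
    calc padicValNat p (x + 1).factorial * (p - 1)
        = (p - 1) * padicValNat p (x + 1).factorial := Nat.mul_comm _ _
      _ = x + 1 - (p.digits (x + 1)).sum := hleg
      _ ≤ x := by omega
  · simp [Nat.factorization_eq_zero_of_not_prime _ hp]

lemma list_PappasT_prod_dvd (N : List ℕ) : (N.map PappasT).prod ∣ PappasT N.sum := by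
  induction N with
  | nil => simp [PappasT]
  | cons x xs ih =>
    simp only [List.map_cons, List.prod_cons, List.sum_cons]
    exact dvd_trans (mul_dvd_mul_left _ ih) (PappasT_mul_dvd x xs.sum)

lemma list_factorial_dvd (L : List ℕ) :
    (L.map fun x => Nat.factorial (x + 1)).prod ∣ (L.map PappasT).prod := by
  induction L with
  | nil => simp
  | cons x xs ih =>
    simp only [List.map_cons, List.prod_cons]
    exact mul_dvd_mul (factorial_dvd_PappasT x) ih

theorem stmt_1 (m : ℕ) (L N : List ℕ)
    (hsum : L.sum + N.sum ≤ m) :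
    (L.map fun x => Nat.factorial (x + 1)).prod * (N.map PappasT).prod ∣ PappasT m := by
  have h1 := list_factorial_dvd L
  calc (L.map fun x => Nat.factorial (x + 1)).prod * (N.map PappasT).prod
      ∣ (L.map PappasT).prod * (N.map PappasT).prod := mul_dvd_mul_right h1 _
    _ ∣ PappasT L.sum * PappasT N.sum :=
        mul_dvd_mul (list_PappasT_prod_dvd L) (list_PappasT_prod_dvd N)
    _ ∣ PappasT (L.sum + N.sum) := PappasT_mul_dvd _ _
    _ ∣ PappasT m := PappasT_mono hsum
end

section
/- Let h be a positive integer and set N = 2 if h = 3, N = h+1 if h+1 is prime, and N = 1 otherwise. Then T_h divides N·(h!)². -/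
lemma two_digit_sum : ∀ h : ℕ, 2 ≤ h → h ≠ 3 → 2 * (Nat.digits 2 h).sum ≤ h := by
  intro h
  induction h using Nat.strong_induction_on with
  | _ h IH =>
    intro h2 h3
    rw [Nat.digits_def' (b := 2) (by norm_num) (by omega), List.sum_cons]
    have hmod := Nat.div_add_mod h 2
    have hlt : h % 2 < 2 := Nat.mod_lt _ (by norm_num)
    by_cases hc : h / 2 = 3
    · -- h = 6 or 7
      rw [hc]
      have : (Nat.digits 2 3).sum = 2 := by norm_num
      omega
    · by_cases hc2 : h / 2 = 1
      · -- h = 2 or 3, so h = 2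
        have : h = 2 := by omega
        subst this
        norm_num
      · have hge : 2 ≤ h / 2 := by omega
        have := IH (h / 2) (by omega) hge hc
        omega

lemma odd_digit_sum (p : ℕ) (hp : 3 ≤ p) : ∀ h : ℕ, p ≤ h →
    2 * (Nat.digits p h).sum ≤ h + h % (p - 1) := by
  intro h
  induction h using Nat.strong_induction_on with
  | _ h IH =>
    intro hph
    have hp1 : 1 < p := by omega
    rw [Nat.digits_def' hp1 (by omega), List.sum_cons]
    have hmod : p * (h / p) + h % p = h := Nat.div_add_mod h p
    have ham : h % p < p := Nat.mod_lt _ (by omega)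
    have hm1 : 1 ≤ h / p := (Nat.one_le_div_iff (by omega)).mpr hph
    have hrnn : 0 ≤ h % (p - 1) := Nat.zero_le _
    by_cases hmp : h / p < p
    · have hdm : Nat.digits p (h / p) = [h / p] := by
        rw [Nat.digits_def' hp1 (by omega), Nat.mod_eq_of_lt hmp, Nat.div_eq_of_lt hmp,
          Nat.digits_zero]
      rw [hdm]
      simp only [List.sum_cons, List.sum_nil, add_zero]
      by_cases hcase : h % p = p - 1 ∧ h / p = 1
      · obtain ⟨ha', hm'⟩ := hcase
        have hpm : p * (h / p) = p := by rw [hm', mul_one]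
        have hh : h = 1 + 2 * (p - 1) := by omega
        have hr : h % (p - 1) = 1 := by
          rw [hh, Nat.add_mul_mod_self_right, Nat.mod_eq_of_lt (by omega)]
        omega
      · have key : h % p + 2 * (h / p) ≤ p * (h / p) := by
          rcases not_and_or.mp hcase with h' | h'
          · have h1 : h % p ≤ p - 2 := by omega
            have h2 : p - 2 ≤ (p - 2) * (h / p) := Nat.le_mul_of_pos_right _ (by omega)
            have h3 : (p - 2) * (h / p) + 2 * (h / p) = p * (h / p) := by
              have : p - 2 + 2 = p := by omega
              nlinarith [this]
            omega
          · have h1 : 2 ≤ h / p := by omega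
            nlinarith
        omega
    · have hIH := IH (h / p) (Nat.div_lt_self (by omega) hp1) (by omega)
      have hmm : h / p % (p - 1) ≤ h / p := Nat.mod_le _ _
      have key : h % p + 2 * (h / p) ≤ p * (h / p) := by nlinarith
      omega

lemma exp_le (p h : ℕ) (hp : p.Prime) (hph : p ≤ h) (hne : h ≠ 3 ∨ p ≠ 2) :
    h / (p - 1) ≤ 2 * (Nat.factorial h).factorization p := by
  haveI : Fact p.Prime := ⟨hp⟩
  have hval : (p - 1) * padicValNat p (Nat.factorial h) = h - (p.digits h).sum :=
    sub_one_mul_padicValNat_factorial h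
  have hfac : (Nat.factorial h).factorization p = padicValNat p (Nat.factorial h) :=
    Nat.factorization_def _ hp
  have hds : (p.digits h).sum ≤ h := Nat.digit_sum_le p h
  rw [hfac]
  rcases eq_or_lt_of_le hp.two_le with h2 | h3
  · -- p = 2
    subst h2
    have hdig : 2 * (Nat.digits 2 h).sum ≤ h := by
      apply two_digit_sum h hph
      omega
    simp only [show (2:ℕ) - 1 = 1 from rfl, one_mul, Nat.div_one] at hval ⊢
    omega
  · -- p ≥ 3
    have hodd := odd_digit_sum p h3 h hph
    have e1 := Nat.div_add_mod h (p - 1)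
    have e2 : (p - 1) * (2 * padicValNat p (Nat.factorial h))
        = 2 * ((p - 1) * padicValNat p (Nat.factorial h)) := by ring
    have hrlt : h % (p - 1) < p - 1 := Nat.mod_lt _ (by omega)
    have hq : (p - 1) * (h / (p - 1)) ≤ (p - 1) * (2 * padicValNat p (Nat.factorial h)) := by
      omega
    exact Nat.le_of_mul_le_mul_left hq (by omega)

lemma prod_primepow_dvd (S : Finset ℕ) (f : ℕ → ℕ) (n : ℕ) (hS : ∀ q ∈ S, Nat.Prime q)
    (hd : ∀ q ∈ S, q ^ f q ∣ n) : (∏ q ∈ S, q ^ f q) ∣ n := by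
  induction S using Finset.induction with
  | empty => simp
  | @insert a s ha IH =>
    rw [Finset.prod_insert ha]
    refine Nat.Coprime.mul_dvd_of_dvd_of_dvd ?_ (hd a (Finset.mem_insert_self a s))
      (IH (fun q hq => hS q (Finset.mem_insert_of_mem hq))
        (fun q hq => hd q (Finset.mem_insert_of_mem hq)))
    refine Nat.Coprime.pow_left _ (Nat.Coprime.prod_right fun q hq => ?_)
    refine Nat.Coprime.pow_right _ ?_
    refine (Nat.coprime_primes (hS a (Finset.mem_insert_self a s))
      (hS q (Finset.mem_insert_of_mem hq))).mpr ?_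
    rintro rfl
    exact ha hq

theorem stmt_3 (h : ℕ) (hh : 1 ≤ h)
    (N : ℕ)
    (hN : N = if h = 3 then 2 else if (h + 1).Prime then h + 1 else 1) :
    PappasT h ∣ N * (Nat.factorial h) ^ 2 := by
  subst hN
  by_cases h3 : h = 3
  · subst h3
    have hP : PappasT 3 = 24 := by
      rw [PappasT, show Finset.range 5 = {0,1,2,3,4} from rfl]
      norm_num [Finset.filter_insert, Finset.filter_singleton]
    rw [hP]
    decide
  · rw [if_neg h3, PappasT]
    have hM0 : (if (h + 1).Prime then h + 1 else 1) * (Nat.factorial h) ^ 2 ≠ 0 := by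
      apply mul_ne_zero
      · split <;> omega
      · positivity
    apply prod_primepow_dvd _ _ _ (fun q hq => (Finset.mem_filter.mp hq).2)
    intro q hq
    obtain ⟨hqr, hqp⟩ := Finset.mem_filter.mp hq
    rw [Finset.mem_range] at hqr
    by_cases hqh : q ≤ h
    · -- q ≤ h : q^e divides (h!)^2
      have hle : h / (q - 1) ≤ ((Nat.factorial h) ^ 2).factorization q := by
        rw [Nat.factorization_pow]
        simpa using exp_le q h hqp hqh (Or.inl h3)
      exact dvd_mul_of_dvd_right
        ((hqp.pow_dvd_iff_le_factorization (by positivity)).mpr hle) _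
    · -- q = h + 1
      have hq1 : q = h + 1 := by omega
      subst hq1
      rw [if_pos hqp]
      have he : h / (h + 1 - 1) = 1 := by
        simp [Nat.div_self (by omega : 0 < h)]
      rw [he, pow_one]
      exact dvd_mul_right _ _
end

section
/- Let Λ be a commutative ring with (2g)! invertible, and V = ⊕_{i=-g}^{g} V_i an sl₂-module as above. Then for every integer n with 1 ≤ n ≤ g, the submodule V_n[f] := {v ∈ V_n : f(v) = 0} is zero. -/
/-!
If `f v = 0` with `v` of weight `n`, the commutation relation gives
`f (e^{k+1} v) = -(k+1)(n+k) • e^k v`. Since `e^g v` has weight `n + 2g > g`, it vanishes; while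
`e^k v` has weight `n + 2k ≤ g`, both factors lie in `[1, 2g]` and are units, so `e^{k+1} v = 0`
forces `e^k v = 0`. Descending from `k = g` gives `v = 0`.
-/

lemma isUnit_natCast_of_le_of_isUnit_factorial {Λ : Type*} [CommRing Λ] {m N : ℕ}
    (hm : 1 ≤ m) (hmN : m ≤ N) (hN : IsUnit (N.factorial : Λ)) : IsUnit (m : Λ) :=
  isUnit_of_dvd_unit (Nat.cast_dvd_cast (Nat.dvd_factorial hm hmN)) hN

namespace Module.End

variable {Λ M : Type*} [CommRing Λ] [AddCommGroup M] [Module Λ M]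

lemma pow_apply_mem_add_two_mul_of_forall_mem {e : Module.End Λ M} {V : ℤ → Submodule Λ M}
    (he : ∀ i : ℤ, ∀ v ∈ V i, e v ∈ V (i + 2)) {i : ℤ} {v : M} (hv : v ∈ V i) (k : ℕ) :
    (e ^ k) v ∈ V (i + 2 * k) := by
  induction k with
  | zero => simpa using hv
  | succ k ih =>
    rw [pow_succ', mul_apply, Nat.cast_succ, mul_add, mul_one, ← add_assoc]
    exact he _ _ ih

variable {e f h : Module.End Λ M}

lemma apply_apply_eq_sub_of_commutator (hefh : e * f - f * e = h) (w : M) :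
    f (e w) = e (f w) - h w := by
  rw [← hefh, LinearMap.sub_apply, mul_apply, mul_apply, sub_sub_cancel]

lemma apply_pow_succ_apply_of_apply_eq_zero (hefh : e * f - f * e = h) {v : M} (hfv : f v = 0)
    {n : ℤ} (hweight : ∀ k : ℕ, h ((e ^ k) v) = (n + 2 * k) • (e ^ k) v) (k : ℕ) :
    f ((e ^ (k + 1)) v) = -((k + 1) * (n + k)) • (e ^ k) v := by
  induction k with
  | zero => simpa [apply_apply_eq_sub_of_commutator hefh, hfv] using hweight 0
  | succ k ih =>
    rw [pow_succ' e (k + 1), mul_apply, apply_apply_eq_sub_of_commutator hefh, ih, map_zsmul,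
      ← mul_apply, ← pow_succ', hweight, ← sub_smul]
    congr 1
    push_cast
    ring

lemma pow_apply_eq_zero_of_pow_succ_apply_eq_zero (hefh : e * f - f * e = h) {v : M}
    (hfv : f v = 0) {n : ℤ} (hweight : ∀ k : ℕ, h ((e ^ k) v) = (n + 2 * k) • (e ^ k) v)
    {k : ℕ} (hunit : IsUnit (((k + 1) * (n + k) : ℤ) : Λ)) (hk : (e ^ (k + 1)) v = 0) :
    (e ^ k) v = 0 := by
  have h0 := apply_pow_succ_apply_of_apply_eq_zero hefh hfv hweight k
  rwa [hk, map_zero, eq_comm, neg_smul, neg_eq_zero, ← Int.cast_smul_eq_zsmul Λ,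
    hunit.smul_eq_zero] at h0

end Module.End

open Module.End in
theorem stmt_8_general (Λ : Type*) [CommRing Λ] (g : ℕ)
    (hΛ : IsUnit ((Nat.factorial (2 * g) : Λ)))
    (M : Type*) [AddCommGroup M] [Module Λ M]
    (V : ℤ → Submodule Λ M)
    (hbound : ∀ i : ℤ, (g : ℤ) < |i| → V i = ⊥)
    (e h f : Module.End Λ M)
    (he : ∀ i : ℤ, ∀ v ∈ V i, e v ∈ V (i + 2))
    (hh : ∀ i : ℤ, ∀ v ∈ V i, h v = i • v)
    (hefh : e * f - f * e = h)
    (n : ℕ) (hn1 : 1 ≤ n) (hng : n ≤ g) :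
    ∀ v ∈ V (n : ℤ), f v = 0 → v = 0 := by
  intro v hv hfv
  have hmem := pow_apply_mem_add_two_mul_of_forall_mem he hv
  have hweight (k : ℕ) : h ((e ^ k) v) = ((n : ℤ) + 2 * k) • (e ^ k) v := hh _ _ (hmem k)
  have hvanish (k : ℕ) (hk : g < n + 2 * k) : (e ^ k) v = 0 := by
    have := hmem k
    rwa [hbound _ (by rw [abs_of_nonneg (by positivity)]; exact_mod_cast hk),
      Submodule.mem_bot] at this
  have hdesc (k : ℕ) (hk : (e ^ (k + 1)) v = 0) : (e ^ k) v = 0 := by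
    by_cases hle : n + 2 * k ≤ g
    · refine pow_apply_eq_zero_of_pow_succ_apply_eq_zero hefh hfv hweight ?_ hk
      have hunit (m : ℕ) (h1 : 1 ≤ m) (h2 : m ≤ 2 * g) : IsUnit (m : Λ) :=
        isUnit_natCast_of_le_of_isUnit_factorial h1 h2 hΛ
      simpa using (hunit (k + 1) (by omega) (by omega)).mul (hunit (n + k) (by omega) (by omega))
    · exact hvanish k (by omega)
  have hdescent (k : ℕ) : (e ^ k) v = 0 → v = 0 := by
    induction k with
    | zero => simp
    | succ k ih => exact fun hk => ih (hdesc k hk)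
  exact hdescent g (hvanish g (by omega))

theorem stmt_8 (Λ : Type*) [CommRing Λ] (g : ℕ) (hg : 1 ≤ g)
    (hΛ : IsUnit ((Nat.factorial (2 * g) : Λ)))
    (M : Type*) [AddCommGroup M] [Module Λ M]
    (V : ℤ → Submodule Λ M)
    (hdirect : DirectSum.IsInternal V)
    (hbound : ∀ i : ℤ, (g : ℤ) < |i| → V i = ⊥)
    (e h f : Module.End Λ M)
    (he : ∀ i : ℤ, ∀ v ∈ V i, e v ∈ V (i + 2))
    (hf : ∀ i : ℤ, ∀ v ∈ V i, f v ∈ V (i - 2))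
    (hh : ∀ i : ℤ, ∀ v ∈ V i, h v = i • v)
    (hefh : e * f - f * e = h)
    (n : ℕ) (hn1 : 1 ≤ n) (hng : n ≤ g) :
    ∀ v ∈ V (n : ℤ), f v = 0 → v = 0 :=
  stmt_8_general Λ g hΛ M V hbound e h f he hh hefh n hn1 hng
end

section
/- Let Λ be a commutative ring with (2g)! invertible, V = ⊕_{i=-g}^{g} V_i an sl₂-module as above, and W ⊆ V an sl₂-submodule (stable under e, h, f). Setting W_i = W ∩ V_i, one has W = ⊕_{i=-g}^{g} W_i. -/
open Polynomial
theorem stmt_9 (Λ : Type*) [CommRing Λ] (g : ℕ) (hg : 1 ≤ g)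
    (hΛ : IsUnit ((Nat.factorial (2 * g) : Λ)))
    (M : Type*) [AddCommGroup M] [Module Λ M]
    (V : ℤ → Submodule Λ M)
    (hdirect : DirectSum.IsInternal V)
    (hbound : ∀ i : ℤ, (g : ℤ) < |i| → V i = ⊥)
    (e h f : Module.End Λ M)
    (he : ∀ i : ℤ, ∀ v ∈ V i, e v ∈ V (i + 2))
    (hf : ∀ i : ℤ, ∀ v ∈ V i, f v ∈ V (i - 2))
    (hh : ∀ i : ℤ, ∀ v ∈ V i, h v = i • v)
    (hefh : e * f - f * e = h)
    (W : Submodule Λ M)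
    (hWe : ∀ w ∈ W, e w ∈ W) (hWh : ∀ w ∈ W, h w ∈ W)
    (hWf : ∀ w ∈ W, f w ∈ W) :
    W = ⨆ i : ℤ, (W ⊓ V i) := by
  classical
  -- units: any integer k with 1 ≤ |k| ≤ 2g maps to a unit in Λ
  have hunit : ∀ k : ℤ, k ≠ 0 → |k| ≤ (2 * g : ℤ) → IsUnit ((k : Λ)) := by
    intro k hk hkle
    rw [abs_le] at hkle
    have h1 : 1 ≤ k.natAbs := by omega
    have h2 : k.natAbs ≤ 2 * g := by omega
    have hdvd : (k.natAbs : ℕ) ∣ Nat.factorial (2 * g) :=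
      Nat.dvd_factorial h1 h2
    have hudvd : ((k.natAbs : ℕ) : Λ) ∣ ((Nat.factorial (2 * g) : ℕ) : Λ) :=
      Nat.cast_dvd_cast hdvd
    have huna : IsUnit ((k.natAbs : ℕ) : Λ) := isUnit_of_dvd_unit hudvd hΛ
    rcases Int.natAbs_eq k with hke | hke
    · rw [hke, Int.cast_natCast]; exact huna
    · rw [hke, Int.cast_neg, Int.cast_natCast]; exact huna.neg
  set S : Finset ℤ := Finset.Icc (-(g : ℤ)) (g : ℤ) with hS
  have eval1 : ∀ (a : ℤ) (v : M),
      (aeval h (X - C ((a : ℤ) : Λ)) : Module.End Λ M) v = h v - ((a : ℤ) : Λ) • v := by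
    intro a v
    simp [map_sub, Polynomial.aeval_X, Polynomial.aeval_C, LinearMap.sub_apply,
      Module.algebraMap_end_apply, Int.cast_smul_eq_zsmul]
  -- action of products of (h - j) on V i
  have hact : ∀ (t : Finset ℤ) (i : ℤ) (v : M), v ∈ V i →
      (aeval h (∏ j ∈ t, (X - C ((j : ℤ) : Λ))) : Module.End Λ M) v
        = (∏ j ∈ t, ((i : Λ) - (j : Λ))) • v := by
    intro t i
    induction t using Finset.induction_on with
    | empty => intro v _; simp
    | insert _ _ hj ih =>
      rename_i a s
      intro v hv
      rw [Finset.prod_insert hj, Finset.prod_insert hj, map_mul, Module.End.mul_apply,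
        ih v hv, map_smul, eval1]
      have hhv : h v = ((i : ℤ) : Λ) • v := by
        rw [hh i v hv, ← Int.cast_smul_eq_zsmul Λ]
      rw [hhv, ← sub_smul, smul_smul, mul_comm]
  -- products of (h - j) preserve W
  have hpres : ∀ (t : Finset ℤ) (w : M), w ∈ W →
      (aeval h (∏ j ∈ t, (X - C ((j : ℤ) : Λ))) : Module.End Λ M) w ∈ W := by
    intro t
    induction t using Finset.induction_on with
    | empty => intro w hw; simpa using hw
    | insert _ _ hj ih =>
      rename_i a s
      intro w hw
      rw [Finset.prod_insert hj, map_mul, Module.End.mul_apply, eval1]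
      exact W.sub_mem (hWh _ (ih w hw)) (W.smul_mem _ (ih w hw))
  apply le_antisymm
  · intro w hw
    have hwT : w ∈ ⨆ i, V i := by
      rw [hdirect.submodule_iSup_eq_top]; trivial
    rw [Submodule.mem_iSup_iff_exists_finsupp] at hwT
    obtain ⟨l, hl, hlsum⟩ := hwT
    have hl0 : ∀ i : ℤ, i ∉ S → l i = 0 := by
      intro i hi
      have habs : (g : ℤ) < |i| := by
        rw [lt_abs]
        simp only [hS, Finset.mem_Icc, not_and_or, not_le] at hi
        omega
      have h2 := hl i
      rw [hbound i habs] at h2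
      simpa using h2
    have hwsum : w = ∑ i ∈ S, l i := by
      rw [← hlsum]
      exact (Finsupp.sum_of_support_subset l (fun i hi => by
        by_contra hc
        exact Finsupp.mem_support_iff.mp hi (hl0 i hc)) _ (fun i _ => rfl))
    have hcomp : ∀ i₀ ∈ S, l i₀ ∈ W := by
      intro i₀ hi₀
      set Q : Module.End Λ M :=
        aeval h (∏ j ∈ S.erase i₀, (X - C ((j : ℤ) : Λ))) with hQ
      have hQw : Q w ∈ W := hpres _ w hw
      have hQeval : Q w = (∏ j ∈ S.erase i₀, ((i₀ : Λ) - (j : Λ))) • l i₀ := by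
        rw [hwsum, map_sum]
        rw [Finset.sum_eq_single i₀]
        · exact hact _ i₀ (l i₀) (hl i₀)
        · intro i hiS hne
          rw [hQ, hact _ i (l i) (hl i),
            Finset.prod_eq_zero (Finset.mem_erase.mpr ⟨hne, hiS⟩) (by ring), zero_smul]
        · intro hni; exact absurd hi₀ hni
      have hcunit : IsUnit (∏ j ∈ S.erase i₀, ((i₀ : Λ) - (j : Λ))) := by
        apply Finset.prod_induction _ IsUnit (fun a b => IsUnit.mul) isUnit_one
        intro j hj
        rw [Finset.mem_erase, hS, Finset.mem_Icc] at hj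
        have hiS' : -(g:ℤ) ≤ i₀ ∧ i₀ ≤ g := by
          rw [hS, Finset.mem_Icc] at hi₀; exact hi₀
        have hcast : ((i₀ : Λ) - (j : Λ)) = (((i₀ - j : ℤ)) : Λ) := by push_cast; ring
        rw [hcast]
        refine hunit _ (by omega) (abs_le.mpr ⟨by omega, by omega⟩)
      obtain ⟨u, hu⟩ := hcunit
      have hli : l i₀ = (↑u⁻¹ : Λ) • Q w := by
        rw [hQeval, ← hu, smul_smul, Units.inv_mul, one_smul]
      rw [hli]
      exact W.smul_mem _ hQw
    rw [hwsum]
    exact Submodule.sum_mem _ fun i hi => Submodule.mem_iSup_of_mem i ⟨hcomp i hi, hl i⟩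
  · exact iSup_le fun i => inf_le_left
end

section
/- Let Λ be a commutative ring with (2g)! invertible, V = ⊕_{i=-g}^{g} V_i an sl₂-module as above, and 0 ≤ n ≤ g. Then the map v ↦ (n!)^{-1}·e^n(v) defines an isomorphism of Λ-modules V_{-n}[f] → V_n[e], with inverse v ↦ (n!)^{-1}·f^n(v). In particular, e^i restricted to V_{-n}[f] is injective for all i ≤ n. -/
/-!
For `v ∈ V₋ₙ` with `f v = 0`, the relation `ef - fe = h` gives
`f (e^(k+1) v) = (k+1)(n-k) • e^k v`, hence `f^j (e^j v) = ∏_{t<j} (t+1)(n-t) • v`. For `j = n`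
the coefficient is `(n!)²`, and for `j ≤ n` it is a unit since `(2g)!` is, which gives injectivity
of `e^j`. The vector `e^(n+1) v` is again killed by `f` and has weight `n+2`, and `e^(g-n)` kills it
for degree reasons, so the same identity with a unit coefficient forces `e^(n+1) v = 0`.
The statement about `V_n[e]` is the same one for the reversed grading and the triple `(f, e, -h)`.
-/

open Finset

section

variable {Λ : Type*} [CommRing Λ] {M : Type*} [AddCommGroup M] [Module Λ M]

lemma isUnit_intCast_of_isUnit_factorial {N : ℕ} (hN : IsUnit (N.factorial : Λ)) {a : ℤ}
    (ha : a ≠ 0) (haN : a.natAbs ≤ N) : IsUnit (a : Λ) := by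
  have hunit : IsUnit (a.natAbs : Λ) :=
    isUnit_of_dvd_unit (Nat.cast_dvd_cast (Nat.dvd_factorial (by omega) haN)) hN
  obtain ha' | ha' := Int.natAbs_eq a
  · rw [ha', Int.cast_natCast]
    exact hunit
  · rw [ha', Int.cast_neg, Int.cast_natCast]
    exact hunit.neg

lemma isUnit_intCast_prod_range_succ_mul_sub {N : ℕ} (hN : IsUnit (N.factorial : Λ)) {n : ℤ}
    {j : ℕ} (hj : ∀ t < j, t + 1 ≤ N ∧ n - t ≠ 0 ∧ (n - t).natAbs ≤ N) :
    IsUnit ((∏ t ∈ range j, ((t + 1) * (n - t) : ℤ) : ℤ) : Λ) := by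
  rw [Int.cast_prod, IsUnit.prod_iff]
  intro t ht
  obtain ⟨ht₁, ht₂, ht₃⟩ := hj t (mem_range.1 ht)
  rw [Int.cast_mul]
  exact (isUnit_intCast_of_isUnit_factorial hN (by omega) (by omega)).mul
    (isUnit_intCast_of_isUnit_factorial hN ht₂ ht₃)

lemma prod_range_succ_mul_sub_eq_factorial_mul_factorial (n : ℕ) :
    ∏ t ∈ range n, ((t + 1) * ((n : ℤ) - t)) = ((n.factorial * n.factorial : ℕ) : ℤ) := by
  have hrev : ∏ t ∈ range n, ((n : ℤ) - t) = ∏ t ∈ range n, ((t : ℤ) + 1) := by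
    rw [← prod_range_reflect]
    refine prod_congr rfl fun t ht => ?_
    have := mem_range.1 ht
    rw [Nat.cast_sub (by omega), Nat.cast_sub (by omega)]
    ring
  rw [prod_mul_distrib, hrev, Nat.cast_mul, ← prod_range_add_one_eq_factorial]
  push_cast
  rfl

variable {V : ℤ → Submodule Λ M} {e f h : Module.End Λ M}

lemma pow_apply_mem_of_raising (he : ∀ i, ∀ v ∈ V i, e v ∈ V (i + 2)) (k : ℕ) {i : ℤ}
    {v : M} (hv : v ∈ V i) : (e ^ k) v ∈ V (i + 2 * k) := by
  induction k with
  | zero => simpa using hv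
  | succ k ih =>
    rw [pow_succ', Module.End.mul_apply]
    convert he _ _ ih using 2
    push_cast
    ring

lemma apply_pow_succ_apply_of_lowest (he : ∀ i, ∀ v ∈ V i, e v ∈ V (i + 2))
    (hh : ∀ i, ∀ v ∈ V i, h v = i • v) (hefh : e * f - f * e = h) {n : ℤ} {v : M}
    (hv : v ∈ V (-n)) (hfv : f v = 0) (k : ℕ) :
    f ((e ^ (k + 1)) v) = ((k + 1) * (n - k) : ℤ) • (e ^ k) v := by
  have hfe : ∀ x, f (e x) = e (f x) - h x := fun x => by
    rw [← hefh]
    simp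
  induction k with
  | zero => simp [hfe, hfv, hh _ _ hv]
  | succ k ih =>
    rw [pow_succ' e (k + 1), Module.End.mul_apply, hfe, ih, map_zsmul,
      hh _ _ (pow_apply_mem_of_raising he _ hv), ← Module.End.mul_apply, ← pow_succ',
      ← sub_smul]
    congr 1
    push_cast
    ring

lemma pow_apply_pow_apply_of_lowest (he : ∀ i, ∀ v ∈ V i, e v ∈ V (i + 2))
    (hh : ∀ i, ∀ v ∈ V i, h v = i • v) (hefh : e * f - f * e = h) {n : ℤ} {v : M}
    (hv : v ∈ V (-n)) (hfv : f v = 0) (j : ℕ) :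
    (f ^ j) ((e ^ j) v) = (∏ t ∈ range j, ((t + 1) * (n - t) : ℤ)) • v := by
  induction j with
  | zero => simp
  | succ j ih =>
    rw [pow_succ, Module.End.mul_apply, apply_pow_succ_apply_of_lowest he hh hefh hv hfv,
      map_zsmul, ih, smul_smul, prod_range_succ, mul_comm]

lemma eq_zero_of_lowest_of_pow_apply_eq_zero (he : ∀ i, ∀ v ∈ V i, e v ∈ V (i + 2))
    (hh : ∀ i, ∀ v ∈ V i, h v = i • v) (hefh : e * f - f * e = h) {n : ℤ} {v : M}
    (hv : v ∈ V (-n)) (hfv : f v = 0) {j : ℕ} (hj : (e ^ j) v = 0)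
    (hunit : IsUnit ((∏ t ∈ range j, ((t + 1) * (n - t) : ℤ) : ℤ) : Λ)) : v = 0 := by
  have h0 := pow_apply_pow_apply_of_lowest he hh hefh hv hfv j
  rw [hj, map_zero, ← Int.cast_smul_eq_zsmul Λ] at h0
  exact hunit.smul_eq_zero.1 h0.symm

lemma pow_succ_apply_eq_zero_of_lowest {g : ℕ} (hΛ : IsUnit ((2 * g).factorial : Λ))
    (hbound : ∀ i : ℤ, (g : ℤ) < |i| → V i = ⊥) (he : ∀ i, ∀ v ∈ V i, e v ∈ V (i + 2))
    (hh : ∀ i, ∀ v ∈ V i, h v = i • v) (hefh : e * f - f * e = h) {n : ℕ} (hn : n ≤ g)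
    {v : M} (hv : v ∈ V (-n)) (hfv : f v = 0) : (e ^ (n + 1)) v = 0 := by
  have hw : (e ^ (n + 1)) v ∈ V (-(-((n : ℤ) + 2))) := by
    convert pow_apply_mem_of_raising he (n + 1) hv using 2
    push_cast
    ring
  have hfw : f ((e ^ (n + 1)) v) = 0 := by
    simp [apply_pow_succ_apply_of_lowest he hh hefh hv hfv n]
  refine eq_zero_of_lowest_of_pow_apply_eq_zero he hh hefh hw hfw (j := g - n) ?_
    (isUnit_intCast_prod_range_succ_mul_sub hΛ fun t ht => by omega)
  have hmem := pow_apply_mem_of_raising he (g - n) hw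
  rw [hbound _ (by rw [abs_of_nonneg (by omega)]; omega)] at hmem
  exact (Submodule.mem_bot Λ).1 hmem

lemma pow_apply_of_lowest {g : ℕ} (hΛ : IsUnit ((2 * g).factorial : Λ))
    (hbound : ∀ i : ℤ, (g : ℤ) < |i| → V i = ⊥) (he : ∀ i, ∀ v ∈ V i, e v ∈ V (i + 2))
    (hh : ∀ i, ∀ v ∈ V i, h v = i • v) (hefh : e * f - f * e = h) {n : ℕ} (hn : n ≤ g)
    {v : M} (hv : v ∈ V (-n)) (hfv : f v = 0) :
    (e ^ n) v ∈ V n ∧ e ((e ^ n) v) = 0 ∧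
      (f ^ n) ((e ^ n) v) = (n.factorial * n.factorial) • v := by
  refine ⟨?_, ?_, ?_⟩
  · convert pow_apply_mem_of_raising he n hv using 2
    ring
  · rw [← Module.End.mul_apply, ← pow_succ']
    exact pow_succ_apply_eq_zero_of_lowest hΛ hbound he hh hefh hn hv hfv
  · rw [pow_apply_pow_apply_of_lowest he hh hefh hv hfv,
      prod_range_succ_mul_sub_eq_factorial_mul_factorial, natCast_zsmul]

lemma pow_apply_of_highest {g : ℕ} (hΛ : IsUnit ((2 * g).factorial : Λ))
    (hbound : ∀ i : ℤ, (g : ℤ) < |i| → V i = ⊥) (hf : ∀ i, ∀ v ∈ V i, f v ∈ V (i - 2))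
    (hh : ∀ i, ∀ v ∈ V i, h v = i • v) (hefh : e * f - f * e = h) {n : ℕ} (hn : n ≤ g)
    {w : M} (hw : w ∈ V n) (hew : e w = 0) :
    (f ^ n) w ∈ V (-n) ∧ f ((f ^ n) w) = 0 ∧
      (e ^ n) ((f ^ n) w) = (n.factorial * n.factorial) • w := by
  have hbound' : ∀ i : ℤ, (g : ℤ) < |i| → V (-i) = ⊥ := fun i hi =>
    hbound (-i) (by rwa [abs_neg])
  have hf' : ∀ i, ∀ v ∈ V (-i), f v ∈ V (-(i + 2)) := fun i v hv => by
    simpa [sub_eq_add_neg, add_comm] using hf (-i) v hv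
  have hh' : ∀ i, ∀ v ∈ V (-i), (-h) v = i • v := fun i v hv => by
    simp [hh _ v hv]
  have hefh' : f * e - e * f = -h := by
    rw [← hefh, neg_sub]
  simpa using pow_apply_of_lowest (V := fun i => V (-i)) hΛ hbound' hf' hh' hefh' hn
    (by simpa using hw) hew

end

theorem stmt_11_general (Λ : Type*) [CommRing Λ] (g : ℕ)
    (hΛ : IsUnit ((Nat.factorial (2 * g) : Λ)))
    (M : Type*) [AddCommGroup M] [Module Λ M]
    (V : ℤ → Submodule Λ M)
    (hbound : ∀ i : ℤ, (g : ℤ) < |i| → V i = ⊥)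
    (e h f : Module.End Λ M)
    (he : ∀ i : ℤ, ∀ v ∈ V i, e v ∈ V (i + 2))
    (hf : ∀ i : ℤ, ∀ v ∈ V i, f v ∈ V (i - 2))
    (hh : ∀ i : ℤ, ∀ v ∈ V i, h v = i • v)
    (hefh : e * f - f * e = h)
    (n : ℕ) (hn : n ≤ g) :
    (∀ v ∈ V (-(n : ℤ)), f v = 0 →
      (e ^ n) v ∈ V (n : ℤ) ∧ e ((e ^ n) v) = 0 ∧
        (f ^ n) ((e ^ n) v) = (Nat.factorial n * Nat.factorial n) • v) ∧
    (∀ w ∈ V (n : ℤ), e w = 0 →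
      (f ^ n) w ∈ V (-(n : ℤ)) ∧ f ((f ^ n) w) = 0 ∧
        (e ^ n) ((f ^ n) w) = (Nat.factorial n * Nat.factorial n) • w) ∧
    (∀ i ≤ n, ∀ v ∈ V (-(n : ℤ)), f v = 0 → ∀ v' ∈ V (-(n : ℤ)), f v' = 0 →
      (e ^ i) v = (e ^ i) v' → v = v') := by
  refine ⟨fun v hv hfv => pow_apply_of_lowest hΛ hbound he hh hefh hn hv hfv,
    fun w hw hew => pow_apply_of_highest hΛ hbound hf hh hefh hn hw hew, ?_⟩
  intro i hi v hv hfv v' hv' hfv' heq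
  rw [← sub_eq_zero]
  refine eq_zero_of_lowest_of_pow_apply_eq_zero he hh hefh (sub_mem hv hv') (j := i) ?_ ?_
    (isUnit_intCast_prod_range_succ_mul_sub hΛ fun t ht => by omega)
  · rw [map_sub, hfv, hfv', sub_zero]
  · rw [map_sub, heq, sub_self]

theorem stmt_11 (Λ : Type*) [CommRing Λ] (g : ℕ) (hg : 1 ≤ g)
    (hΛ : IsUnit ((Nat.factorial (2 * g) : Λ)))
    (M : Type*) [AddCommGroup M] [Module Λ M]
    (V : ℤ → Submodule Λ M)
    (hdirect : DirectSum.IsInternal V)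
    (hbound : ∀ i : ℤ, (g : ℤ) < |i| → V i = ⊥)
    (e h f : Module.End Λ M)
    (he : ∀ i : ℤ, ∀ v ∈ V i, e v ∈ V (i + 2))
    (hf : ∀ i : ℤ, ∀ v ∈ V i, f v ∈ V (i - 2))
    (hh : ∀ i : ℤ, ∀ v ∈ V i, h v = i • v)
    (hefh : e * f - f * e = h)
    (n : ℕ) (hn : n ≤ g) :
    (∀ v ∈ V (-(n : ℤ)), f v = 0 →
      (e ^ n) v ∈ V (n : ℤ) ∧ e ((e ^ n) v) = 0 ∧
        (f ^ n) ((e ^ n) v) = (Nat.factorial n * Nat.factorial n) • v) ∧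
    (∀ w ∈ V (n : ℤ), e w = 0 →
      (f ^ n) w ∈ V (-(n : ℤ)) ∧ f ((f ^ n) w) = 0 ∧
        (e ^ n) ((f ^ n) w) = (Nat.factorial n * Nat.factorial n) • w) ∧
    (∀ i ≤ n, ∀ v ∈ V (-(n : ℤ)), f v = 0 → ∀ v' ∈ V (-(n : ℤ)), f v' = 0 →
      (e ^ i) v = (e ^ i) v' → v = v') :=
  stmt_11_general Λ g hΛ M V hbound e h f he hf hh hefh n hn
end

section
/- For integers n with 1 ≤ n ≤ 2g+d, define c_n = ∑_{j=n}^{2g+d} (−1)^{n−1}·C(j,n)/j (an element of ℚ), the coefficients arising from the truncated logarithm of the shift operator. Then for every k with 1 ≤ k ≤ 2g+d, ∑_{n=1}^{2g+d} c_n·n^k = δ_{k,1}; i.e., the truncated logarithm of the shift operator picks out the linear part on polynomials of degree ≤ 2g+d. -/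
private def DD (j k : ℕ) : ℚ :=
  ∑ n ∈ Finset.range (j + 1), (-1 : ℚ) ^ n * (Nat.choose j n : ℚ) * (n : ℚ) ^ k

private lemma DD_rec (j m : ℕ) :
    DD (j + 1) (m + 1) = ((j : ℚ) + 1) * (DD (j + 1) m - DD j m) := by
  have key : ∀ i : ℕ, ((j+1).choose (i+1) : ℚ) * ((i : ℚ) + 1) = ((j : ℚ) + 1) * (j.choose i : ℚ) := by
    intro i
    have h := Nat.add_one_mul_choose_eq j i
    have := congrArg (Nat.cast : ℕ → ℚ) h
    push_cast at this
    linarith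
  have hL : DD (j + 1) (m + 1)
      = ∑ i ∈ Finset.range (j + 1),
          (-1 : ℚ) ^ (i + 1) * (((j : ℚ) + 1) * (Nat.choose j i : ℚ)) * ((i : ℚ) + 1) ^ m := by
    rw [DD, Finset.sum_range_succ' (fun n => (-1 : ℚ) ^ n * (Nat.choose (j+1) n : ℚ) * (n : ℚ) ^ (m+1)) (j+1)]
    simp only [Nat.cast_zero, Nat.choose_zero_right, Nat.cast_one, zero_pow (by omega : m + 1 ≠ 0),
      mul_zero, add_zero]
    apply Finset.sum_congr rfl
    intro i _
    rw [← key i]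
    push_cast
    ring
  have hDj : DD j m = ∑ n ∈ Finset.range (j + 2), (-1 : ℚ) ^ n * (Nat.choose j n : ℚ) * (n : ℚ) ^ m := by
    symm
    rw [Finset.sum_range_succ, Nat.choose_succ_self]
    simp [DD]
  have hR : DD (j + 1) m - DD j m
      = ∑ i ∈ Finset.range (j + 1),
          (-1 : ℚ) ^ (i + 1) * (Nat.choose j i : ℚ) * ((i : ℚ) + 1) ^ m := by
    rw [DD, hDj, ← Finset.sum_sub_distrib]
    rw [Finset.sum_range_succ' (fun n => (-1 : ℚ) ^ n * (Nat.choose (j+1) n : ℚ) * (n : ℚ) ^ m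
        - (-1 : ℚ) ^ n * (Nat.choose j n : ℚ) * (n : ℚ) ^ m) (j+1)]
    simp only [Nat.choose_zero_right, Nat.cast_one, sub_self, add_zero, pow_zero]
    apply Finset.sum_congr rfl
    intro i _
    have hp : ((j+1).choose (i+1) : ℚ) = (j.choose i : ℚ) + (j.choose (i+1) : ℚ) := by
      rw [Nat.choose_succ_succ]; push_cast; ring
    rw [hp]
    push_cast
    ring
  rw [hL, hR, Finset.mul_sum]
  apply Finset.sum_congr rfl
  intro i _
  ring

private lemma DD_zero (m j : ℕ) (h : m < j) : DD j m = 0 := by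
  induction m generalizing j with
  | zero =>
    obtain ⟨j', rfl⟩ := Nat.exists_eq_add_of_lt h
    have h0 := Int.alternating_sum_range_choose (n := 0 + j' + 1)
    rw [if_neg (by omega)] at h0
    have := congrArg (Int.cast : ℤ → ℚ) h0
    push_cast at this
    rw [DD]
    simpa using this
  | succ m ih =>
    obtain ⟨j', rfl⟩ : ∃ j', j = j' + 1 := ⟨j - 1, by omega⟩
    rw [DD_rec, ih (j' + 1) (by omega), ih j' (by omega)]
    ring

theorem stmt_18 (g d k : ℕ) (hk1 : 1 ≤ k) (hk : k ≤ 2 * g + d) :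
    ∑ n ∈ Finset.Icc 1 (2 * g + d),
        (∑ j ∈ Finset.Icc n (2 * g + d),
            ((-1 : ℚ)) ^ (n - 1) * (Nat.choose j n : ℚ) / (j : ℚ)) * (n : ℚ) ^ k =
      if k = 1 then 1 else 0 := by
  set M := 2 * g + d with hM
  have hM1 : 1 ≤ M := le_trans hk1 hk
  have step1 : ∑ n ∈ Finset.Icc 1 M,
        (∑ j ∈ Finset.Icc n M,
            ((-1 : ℚ)) ^ (n - 1) * (Nat.choose j n : ℚ) / (j : ℚ)) * (n : ℚ) ^ k
      = ∑ j ∈ Finset.Icc 1 M, ∑ n ∈ Finset.Icc 1 j,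
          ((-1 : ℚ)) ^ (n - 1) * (Nat.choose j n : ℚ) / (j : ℚ) * (n : ℚ) ^ k := by
    simp_rw [Finset.sum_mul]
    exact Finset.sum_comm' (by intro n j; simp only [Finset.mem_Icc]; omega)
  rw [step1]
  have step2 : ∀ j ∈ Finset.Icc 1 M,
      ∑ n ∈ Finset.Icc 1 j,
          ((-1 : ℚ)) ^ (n - 1) * (Nat.choose j n : ℚ) / (j : ℚ) * (n : ℚ) ^ k
        = DD (j - 1) (k - 1) - DD j (k - 1) := by
    intro j hj
    rw [Finset.mem_Icc] at hj
    have hj1 : 1 ≤ j := hj.1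
    have hjQ : (j : ℚ) ≠ 0 := by positivity
    have hsum : ∑ n ∈ Finset.Icc 1 j,
        ((-1 : ℚ)) ^ (n - 1) * (Nat.choose j n : ℚ) / (j : ℚ) * (n : ℚ) ^ k
        = -(DD j k) / (j : ℚ) := by
      rw [DD, Finset.sum_range_succ'
        (fun n => (-1 : ℚ) ^ n * (Nat.choose j n : ℚ) * (n : ℚ) ^ k) j]
      rw [← Finset.Ico_add_one_right_eq_Icc, Finset.sum_Ico_eq_sum_range]
      simp only [Nat.cast_zero, zero_pow (by omega : k ≠ 0), mul_zero, add_zero]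
      rw [eq_div_iff hjQ, Finset.sum_mul, ← Finset.sum_neg_distrib]
      apply Finset.sum_congr (by norm_num)
      intro i _
      have h1 : 1 + i - 1 = i := by omega
      rw [h1]
      push_cast
      field_simp
      ring
    rw [hsum]
    obtain ⟨j', rfl⟩ : ∃ j', j = j' + 1 := ⟨j - 1, by omega⟩
    obtain ⟨k', rfl⟩ : ∃ k', k = k' + 1 := ⟨k - 1, by omega⟩
    rw [DD_rec j' k', Nat.add_sub_cancel, Nat.add_sub_cancel]
    field_simp
    push_cast
    ring
  rw [Finset.sum_congr rfl step2]
  rw [← Finset.Ico_add_one_right_eq_Icc, Finset.sum_Ico_eq_sum_range]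
  have hre : ∀ i ∈ Finset.range (M + 1 - 1),
      DD (1 + i - 1) (k - 1) - DD (1 + i) (k - 1)
        = DD i (k - 1) - DD (i + 1) (k - 1) := by
    intro i _
    congr 2 <;> omega
  rw [Finset.sum_congr rfl hre, Finset.sum_range_sub' (fun i => DD i (k - 1))]
  have hDM : DD (M + 1 - 1) (k - 1) = 0 := by
    apply DD_zero
    omega
  rw [hDM, sub_zero]
  rcases eq_or_ne k 1 with h1 | h1
  · simp [DD, h1]
  · rw [if_neg h1]
    simp [DD, zero_pow (by omega : k - 1 ≠ 0)]
end

section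
/- Let Λ be a commutative ring with (2g)! invertible and V = ⊕_{i=-g}^{g} V_i an sl₂-module as above. For each 0 ≤ n ≤ g and 0 ≤ i ≤ n, the submodules e^i(V_{-n}[f]) and f^{n-i}(V_n[e]) of V_{-n+2i} coincide. -/
/-!
A vector `u` of positive weight `m` with `f u = 0` vanishes: `e^k u = 0` once `m + 2k > g`, and
`f (e^(k+1) u) = -(k+1)(m+k) • e^k u` with an invertible coefficient carries the vanishing back
down to `k = 0`. For `v ∈ V_{-n}[f]` this applies to `e^(n+1) v`, so `w = e^n v` lies in `V_n[e]`,
and the same identity gives `f^(n-i) w = c • e^i v` for a unit `c`, whence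
`e^i V_{-n}[f] ⊆ f^(n-i) V_n[e]`. The reverse inclusion is the same argument for the grading
`j ↦ V_{-j}` with `e` and `f` exchanged.
-/

open scoped Nat

section GradedSl2

variable {Λ : Type*} [CommRing Λ] {M : Type*} [AddCommGroup M] [Module Λ M]

lemma isUnit_intCast_of_abs_le {g : ℕ} (hΛ : IsUnit (g ! : Λ)) {z : ℤ} (h0 : z ≠ 0)
    (hz : |z| ≤ g) : IsUnit (z : Λ) := by
  have habs : (z.natAbs : ℤ) = |z| := Int.natCast_natAbs z
  have hdvd : z.natAbs ∣ g ! := Nat.dvd_factorial (by omega) (by omega)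
  have hunit : IsUnit ((z.natAbs : ℤ) : Λ) := by
    rw [Int.cast_natCast]; exact isUnit_of_dvd_unit (Nat.cast_dvd_cast hdvd) hΛ
  rcases abs_choice z with h | h <;> rw [habs, h] at hunit
  · exact hunit
  · simpa using hunit.neg

variable {V : ℤ → Submodule Λ M} {e f : Module.End Λ M}

lemma pow_apply_mem {d : ℤ} (he : ∀ i, ∀ v ∈ V i, e v ∈ V (i + d)) {m : ℤ} {v : M}
    (hv : v ∈ V m) (k : ℕ) : (e ^ k) v ∈ V (m + k * d) := by
  induction k with
  | zero => simpa using hv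
  | succ k ih =>
    rw [pow_succ', Module.End.mul_apply]
    convert he _ _ ih using 2
    push_cast; ring

lemma apply_pow_succ_apply_of_apply_eq_zero (he : ∀ i, ∀ v ∈ V i, e v ∈ V (i + 2))
    (hef : ∀ i, ∀ v ∈ V i, e (f v) - f (e v) = i • v) {m : ℤ} {v : M} (hv : v ∈ V m)
    (hfv : f v = 0) (k : ℕ) :
    f ((e ^ (k + 1)) v) = (-((k + 1) * (m + k)) : ℤ) • (e ^ k) v := by
  induction k with
  | zero =>
    have := hef m v hv
    simp only [hfv, map_zero, zero_sub] at this
    simp [← this]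
  | succ k ih =>
    have hw := hef _ _ (pow_apply_mem he hv (k + 1))
    rw [pow_succ' e (k + 1), Module.End.mul_apply]
    rw [ih, map_zsmul, ← Module.End.mul_apply, ← pow_succ'] at hw
    linear_combination (norm := module) -hw

lemma isUnit_lowering_coeff {g : ℕ} (hΛ : IsUnit (g ! : Λ)) {m : ℤ} {k : ℕ}
    (hk : k + 1 ≤ g) (hmk₀ : m + k ≠ 0) (hmk : |m + k| ≤ g) :
    IsUnit ((-((k + 1) * (m + k)) : ℤ) : Λ) := by
  rw [Int.cast_neg, Int.cast_mul]
  refine (IsUnit.mul ?_ (isUnit_intCast_of_abs_le hΛ hmk₀ hmk)).neg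
  exact isUnit_intCast_of_abs_le hΛ (by omega) (by rw [abs_of_pos (by omega)]; omega)

lemma eq_zero_of_apply_eq_zero_of_pos {g : ℕ} (hΛ : IsUnit (g ! : Λ))
    (htop : ∀ i : ℤ, (g : ℤ) < i → V i = ⊥) (he : ∀ i, ∀ v ∈ V i, e v ∈ V (i + 2))
    (hef : ∀ i, ∀ v ∈ V i, e (f v) - f (e v) = i • v) {m : ℤ} (hm : 0 < m) {u : M}
    (hu : u ∈ V m) (hfu : f u = 0) : u = 0 := by
  suffices h : ∀ d k : ℕ, (g : ℤ) < m + 2 * k + d → (e ^ k) u = 0 by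
    simpa using h g 0 (by omega)
  intro d
  induction d with
  | zero =>
    intro k hk
    have hmem := pow_apply_mem he hu k
    rwa [htop _ (by push_cast at hk; linarith), Submodule.mem_bot] at hmem
  | succ d ih =>
    intro k hk
    by_cases hlarge : (g : ℤ) < m + 2 * k
    · exact ih k (by omega)
    · have hlow := apply_pow_succ_apply_of_apply_eq_zero he hef hu hfu k
      have hunit := isUnit_lowering_coeff hΛ (m := m) (k := k) (by omega) (by omega)
        (by rw [abs_of_pos (by omega)]; omega)
      rwa [ih (k + 1) (by push_cast; omega), map_zero, eq_comm, ← Int.cast_smul_eq_zsmul Λ,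
        hunit.smul_eq_zero] at hlow

lemma map_pow_inf_ker_le {g : ℕ} (hΛ : IsUnit (g ! : Λ))
    (htop : ∀ i : ℤ, (g : ℤ) < i → V i = ⊥) (he : ∀ i, ∀ v ∈ V i, e v ∈ V (i + 2))
    (hef : ∀ i, ∀ v ∈ V i, e (f v) - f (e v) = i • v) {n : ℕ} (hn : n ≤ g) {i : ℕ}
    (hi : i ≤ n) :
    (V (-n) ⊓ LinearMap.ker f).map (e ^ i) ≤ (V n ⊓ LinearMap.ker e).map (f ^ (n - i)) := by
  rintro _ ⟨v, ⟨hv, hfv : f v = 0⟩, rfl⟩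
  have hmem := pow_apply_mem he hv
  have hkill : (e ^ (n + 1)) v = 0 := by
    refine eq_zero_of_apply_eq_zero_of_pos hΛ htop he hef (m := n + 2) (by omega) ?_ ?_
    · convert hmem (n + 1) using 2; push_cast; ring
    · rw [apply_pow_succ_apply_of_apply_eq_zero he hef hv hfv]; simp
  have hstep : ∀ d ≤ n, (e ^ (n - d)) v ∈ (V n ⊓ LinearMap.ker e).map (f ^ d) := by
    intro d
    induction d with
    | zero =>
      intro _
      refine Submodule.mem_map.mpr ⟨(e ^ n) v, Submodule.mem_inf.mpr ⟨?_, ?_⟩, by simp⟩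
      · convert hmem n using 2; ring
      · rw [LinearMap.mem_ker, ← Module.End.mul_apply, ← pow_succ']; exact hkill
    | succ d ih =>
      intro hd
      obtain ⟨w, hw, hwv⟩ := ih (by omega)
      have hlow := apply_pow_succ_apply_of_apply_eq_zero he hef hv hfv (n - (d + 1))
      rw [show n - (d + 1) + 1 = n - d by omega, ← hwv, ← Module.End.mul_apply, ← pow_succ',
        ← Int.cast_smul_eq_zsmul Λ] at hlow
      have hunit := isUnit_lowering_coeff hΛ (m := -n) (k := n - (d + 1)) (by omega) (by omega)
        (by rw [abs_of_neg (by omega)]; omega)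
      rw [← Submodule.smul_mem_iff_of_isUnit _ hunit, ← hlow]
      exact ⟨w, hw, rfl⟩
  simpa [Nat.sub_sub_self hi] using hstep (n - i) (by omega)

end GradedSl2

theorem stmt_19_general (Λ : Type*) [CommRing Λ] (g : ℕ)
    (hΛ : IsUnit ((Nat.factorial (2 * g) : Λ)))
    (M : Type*) [AddCommGroup M] [Module Λ M]
    (V : ℤ → Submodule Λ M)
    (hbound : ∀ i : ℤ, (g : ℤ) < |i| → V i = ⊥)
    (e h f : Module.End Λ M)
    (he : ∀ i : ℤ, ∀ v ∈ V i, e v ∈ V (i + 2))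
    (hf : ∀ i : ℤ, ∀ v ∈ V i, f v ∈ V (i - 2))
    (hh : ∀ i : ℤ, ∀ v ∈ V i, h v = i • v)
    (hefh : e * f - f * e = h)
    (n : ℕ) (hn : n ≤ g) (i : ℕ) (hi : i ≤ n) :
    Submodule.map (e ^ i) (V (-(n : ℤ)) ⊓ LinearMap.ker f) =
      Submodule.map (f ^ (n - i)) (V (n : ℤ) ⊓ LinearMap.ker e) := by
  have hΛ' : IsUnit (g ! : Λ) :=
    isUnit_of_dvd_unit (Nat.cast_dvd_cast (Nat.factorial_dvd_factorial (by omega))) hΛ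
  have hef : ∀ i : ℤ, ∀ v ∈ V i, e (f v) - f (e v) = i • v := fun i v hv => by
    rw [← hh i v hv, ← hefh]; rfl
  have hle := map_pow_inf_ker_le (V := fun j => V (-j)) (e := f) (f := e) hΛ'
    (fun j hj => hbound _ (by rwa [abs_neg, abs_of_pos (by omega)]))
    (fun j v hv => by convert hf _ v hv using 2; ring)
    (fun j v hv => by rw [← neg_sub, hef _ v hv, neg_smul, neg_neg]) hn (Nat.sub_le n i)
  simp only [neg_neg, Nat.sub_sub_self hi] at hle
  have hge := map_pow_inf_ker_le hΛ' (fun j hj => hbound j (by rwa [abs_of_pos (by omega)]))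
    he hef hn hi
  exact le_antisymm hge hle

theorem stmt_19 (Λ : Type*) [CommRing Λ] (g : ℕ) (hg : 1 ≤ g)
    (hΛ : IsUnit ((Nat.factorial (2 * g) : Λ)))
    (M : Type*) [AddCommGroup M] [Module Λ M]
    (V : ℤ → Submodule Λ M)
    (hdirect : DirectSum.IsInternal V)
    (hbound : ∀ i : ℤ, (g : ℤ) < |i| → V i = ⊥)
    (e h f : Module.End Λ M)
    (he : ∀ i : ℤ, ∀ v ∈ V i, e v ∈ V (i + 2))
    (hf : ∀ i : ℤ, ∀ v ∈ V i, f v ∈ V (i - 2))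
    (hh : ∀ i : ℤ, ∀ v ∈ V i, h v = i • v)
    (hefh : e * f - f * e = h)
    (n : ℕ) (hn : n ≤ g) (i : ℕ) (hi : i ≤ n) :
    Submodule.map (e ^ i) (V (-(n : ℤ)) ⊓ LinearMap.ker f) =
      Submodule.map (f ^ (n - i)) (V (n : ℤ) ⊓ LinearMap.ker e) :=
  stmt_19_general Λ g hΛ M V hbound e h f he hf hh hefh n hn i hi
end
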